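/- arXiv:2007.06882 — 4 statements merged into one kernel-verified Lean document; each statement's English description precedes it below -/
import Mathlib

section
/- For H > 1/2, the planar curve α_H(u) = (r(u), h(u)), where r(u) = arctanh(cos(u)/(2H)) and h(u) = (2H/√(4H²−1)) · arcsin(sin(u)/√(4H²−cos²(u))), has positive Euclidean curvature: for all u, (r'(u)h''(u) − h'(u)r''(u)) / (r'(u)² + h'(u)²)^{3/2} = (4H² − cos²(u))/(2H) > 0; in particular the curve is strictly convex. -/
open Real

noncomputable def arctanh (x : ℝ) : ℝ := (1/2) * Real.log ((1+x)/(1-x))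

lemma arctanh_hasDerivAt {x : ℝ} (h1 : -1 < x) (h2 : x < 1) :
    HasDerivAt arctanh (1/(1-x^2)) x := by
  have hden : (1 - x) ≠ 0 := by linarith
  have hpos : 0 < (1+x)/(1-x) := by
    apply div_pos <;> linarith
  have hnum : HasDerivAt (fun x : ℝ => 1+x) 1 x := (hasDerivAt_id x).const_add 1
  have hd : HasDerivAt (fun x : ℝ => 1-x) (-1) x := (hasDerivAt_id x).const_sub 1
  have hdiv := hnum.div hd hden
  have hlog := (hdiv.log hpos.ne')
  have := hlog.const_mul (1/2 : ℝ)
  refine this.congr_deriv ?_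
  have hne1 : (1 + x) ≠ 0 := by linarith
  have hsq : 1 - x^2 ≠ 0 := by nlinarith
  simp only [Pi.div_apply]
  field_simp
  ring

noncomputable def rC (H u : ℝ) : ℝ := arctanh (Real.cos u / (2*H))

lemma hDpos {H : ℝ} (hH : 1/2 < H) (u : ℝ) : 0 < 4*H^2 - Real.cos u ^ 2 := by
  nlinarith [Real.cos_le_one u, Real.neg_one_le_cos u]

lemma rC_hasDerivAt {H : ℝ} (hH : 1/2 < H) (u : ℝ) :
    HasDerivAt (rC H) (-(2*H*Real.sin u)/(4*H^2 - Real.cos u ^ 2)) u := by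
  have hHpos : (0:ℝ) < 2*H := by linarith
  have hin : HasDerivAt (fun u : ℝ => Real.cos u / (2*H)) (-Real.sin u / (2*H)) u :=
    (Real.hasDerivAt_cos u).div_const (2*H)
  have h1 : -1 < Real.cos u / (2*H) := by
    rw [lt_div_iff₀ hHpos]; nlinarith [Real.neg_one_le_cos u]
  have h2 : Real.cos u / (2*H) < 1 := by
    rw [div_lt_one hHpos]; nlinarith [Real.cos_le_one u]
  have := (arctanh_hasDerivAt h1 h2).comp u hin
  refine this.congr_deriv ?_
  have hD := hDpos hH u
  have hq : 1 - (Real.cos u / (2*H))^2 = (4*H^2 - Real.cos u ^ 2)/(4*H^2) := by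
    field_simp; ring
  rw [hq]
  field_simp
  ring

noncomputable def hC (H u : ℝ) : ℝ :=
  (2*H / Real.sqrt (4*H^2 - 1)) * Real.arcsin (Real.sin u / Real.sqrt (4*H^2 - Real.cos u ^ 2))

lemma hC_hasDerivAt {H : ℝ} (hH : 1/2 < H) (u : ℝ) :
    HasDerivAt (hC H) (2*H*Real.cos u/(4*H^2 - Real.cos u ^ 2)) u := by
  have hD := hDpos hH u
  have hk : (0:ℝ) < 4*H^2 - 1 := by nlinarith
  set s := Real.sin u with hs
  set c := Real.cos u with hc
  have hsd : (0:ℝ) < Real.sqrt (4*H^2 - c ^ 2) := Real.sqrt_pos.2 hD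
  set sd := Real.sqrt (4*H^2 - c ^ 2) with hsddef
  have hsd2 : sd^2 = 4*H^2 - c^2 := Real.sq_sqrt hD.le
  set sk := Real.sqrt (4*H^2 - 1) with hskdef
  have hskpos : (0:ℝ) < sk := Real.sqrt_pos.2 hk
  have hsk2 : sk^2 = 4*H^2 - 1 := Real.sq_sqrt hk.le
  have htrig : s^2 + c^2 = 1 := Real.sin_sq_add_cos_sq u
  -- derivative of D
  have hDder : HasDerivAt (fun u : ℝ => 4*H^2 - Real.cos u ^ 2) (2*c*s) u := by
    have := ((Real.hasDerivAt_cos u).pow 2).const_sub (4*H^2)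
    refine this.congr_deriv ?_
    simp [hs, hc]
  have hsqrtder : HasDerivAt (fun u : ℝ => Real.sqrt (4*H^2 - Real.cos u ^ 2))
      (2*c*s/(2*sd)) u := hDder.sqrt hD.ne'
  have hfder : HasDerivAt (fun u : ℝ => Real.sin u / Real.sqrt (4*H^2 - Real.cos u ^ 2))
      ((c * sd - s * (2*c*s/(2*sd))) / sd^2) u :=
    (Real.hasDerivAt_sin u).div hsqrtder hsd.ne'
  -- arcsin bounds
  have habs : |s / sd| < 1 := by
    rw [abs_div, abs_of_pos hsd, div_lt_one hsd]
    have : |s| = Real.sqrt (s^2) := (Real.sqrt_sq_eq_abs s).symm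
    rw [this, hsddef]
    apply Real.sqrt_lt_sqrt (sq_nonneg s)
    nlinarith
  obtain ⟨hb1, hb2⟩ := abs_lt.1 habs
  have harc := (Real.hasDerivAt_arcsin (by linarith : s/sd ≠ -1) hb2.ne).comp u hfder
  have hfin := harc.const_mul (2*H/sk)
  refine hfin.congr_deriv ?_
  have h1 : 1 - (s/sd)^2 = (4*H^2-1)/(4*H^2-c^2) := by
    rw [div_pow, hsd2]
    field_simp
    linarith
  rw [h1, Real.sqrt_div hk.le, ← hsddef, ← hskdef]
  rw [div_div_eq_mul_div, one_mul]
  have hD' : H^2*4 - c^2 ≠ 0 := by linarith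
  field_simp
  linear_combination (c*(1-c^2)) * hsd2 - (c*(4*H^2-c^2)) * htrig - (c*sd^2) * hsk2

lemma rC2_hasDerivAt {H : ℝ} (hH : 1/2 < H) (u : ℝ) :
    HasDerivAt (fun u => -(2*H*Real.sin u)/(4*H^2 - Real.cos u ^ 2))
      ((-(2*H*Real.cos u)*(4*H^2 - Real.cos u ^ 2) - -(2*H*Real.sin u)*(2*Real.cos u*Real.sin u))
        /(4*H^2 - Real.cos u ^ 2)^2) u := by
  have hD := hDpos hH u
  have hnum : HasDerivAt (fun u : ℝ => -(2*H*Real.sin u)) (-(2*H*Real.cos u)) u :=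
    ((Real.hasDerivAt_sin u).const_mul (2*H)).neg
  have hden : HasDerivAt (fun u : ℝ => 4*H^2 - Real.cos u ^ 2) (2*Real.cos u*Real.sin u) u := by
    have := ((Real.hasDerivAt_cos u).pow 2).const_sub (4*H^2)
    refine this.congr_deriv ?_
    simp
  exact hnum.div hden hD.ne'

lemma hC2_hasDerivAt {H : ℝ} (hH : 1/2 < H) (u : ℝ) :
    HasDerivAt (fun u => 2*H*Real.cos u/(4*H^2 - Real.cos u ^ 2))
      ((-(2*H*Real.sin u)*(4*H^2 - Real.cos u ^ 2) - 2*H*Real.cos u*(2*Real.cos u*Real.sin u))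
        /(4*H^2 - Real.cos u ^ 2)^2) u := by
  have hD := hDpos hH u
  have hnum : HasDerivAt (fun u : ℝ => 2*H*Real.cos u) (-(2*H*Real.sin u)) u := by
    have := (Real.hasDerivAt_cos u).const_mul (2*H)
    refine this.congr_deriv ?_
    ring
  have hden : HasDerivAt (fun u : ℝ => 4*H^2 - Real.cos u ^ 2) (2*Real.cos u*Real.sin u) u := by
    have := ((Real.hasDerivAt_cos u).pow 2).const_sub (4*H^2)
    refine this.congr_deriv ?_
    simp
  exact hnum.div hden hD.ne'

/-- The planar curve `α_H = (r, h)` has Euclidean curvature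
`(r'h'' − h'r'')/((r')² + (h')²)^{3/2} = (4H² − cos²u)/(2H) > 0`;
in particular it is strictly convex. -/
theorem stmt1 (H : ℝ) (hH : 1/2 < H) (u : ℝ) :
    (deriv (rC H) u * deriv (deriv (hC H)) u - deriv (hC H) u * deriv (deriv (rC H)) u) /
        ((deriv (rC H) u ^ 2 + deriv (hC H) u ^ 2) ^ ((3:ℝ)/2))
      = (4*H^2 - Real.cos u ^ 2) / (2*H) ∧
    0 < (4*H^2 - Real.cos u ^ 2) / (2*H) := by
  have hD := hDpos hH u
  have hHpos : (0:ℝ) < 2*H := by linarith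
  refine ⟨?_, div_pos hD hHpos⟩
  have e1 : deriv (rC H) = fun u => -(2*H*Real.sin u)/(4*H^2 - Real.cos u ^ 2) :=
    funext fun u => (rC_hasDerivAt hH u).deriv
  have e2 : deriv (hC H) = fun u => 2*H*Real.cos u/(4*H^2 - Real.cos u ^ 2) :=
    funext fun u => (hC_hasDerivAt hH u).deriv
  rw [e1, e2, (rC2_hasDerivAt hH u).deriv, (hC2_hasDerivAt hH u).deriv]
  have htrig : Real.sin u ^2 + Real.cos u ^2 = 1 := Real.sin_sq_add_cos_sq u
  have hsum : (-(2*H*Real.sin u)/(4*H^2 - Real.cos u ^ 2))^2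
      + (2*H*Real.cos u/(4*H^2 - Real.cos u ^ 2))^2
      = (2*H/(4*H^2 - Real.cos u ^ 2))^2 := by
    have hD' : H^2*4 - Real.cos u^2 ≠ 0 := by linarith
    field_simp
    linear_combination htrig
  rw [hsum]
  have hbpos : (0:ℝ) < 2*H/(4*H^2 - Real.cos u ^ 2) := div_pos hHpos hD
  have hpow : ((2*H/(4*H^2 - Real.cos u ^ 2))^2 : ℝ)^((3:ℝ)/2)
      = (2*H/(4*H^2 - Real.cos u ^ 2))^3 := by
    rw [← Real.rpow_natCast (2*H/(4*H^2 - Real.cos u ^ 2)) 2,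
        ← Real.rpow_natCast (2*H/(4*H^2 - Real.cos u ^ 2)) 3,
        ← Real.rpow_mul hbpos.le]
    norm_num
  rw [hpow]
  have hD' : H^2*4 - Real.cos u^2 ≠ 0 := by linarith
  field_simp
  linear_combination (H^2*4 - Real.cos u^2) * htrig
end

section
/- Let 1/2 < H₁ < H₂ and suppose there exists u₀ ∈ [0, 2π] such that α_{H₁}(u₀) = α_{H₂}(u₀), where α_H(u) = (arctanh(cos(u)/(2H)), (2H/√(4H²−1)) · arcsin(sin(u)/√(4H²−cos²(u)))). Then a contradiction follows; i.e., for all H₁ ≠ H₂ in (1/2, ∞) and all u₀, α_{H₁}(u₀) ≠ α_{H₂}(u₀). -/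
open Real

lemma arctanh_inj' {x y : ℝ} (hx : |x| < 1) (hy : |y| < 1)
    (h : arctanh x = arctanh y) : x = y := by
  have hx1 : -1 < x := (abs_lt.mp hx).1
  have hx2 : x < 1 := (abs_lt.mp hx).2
  have hy1 : -1 < y := (abs_lt.mp hy).1
  have hy2 : y < 1 := (abs_lt.mp hy).2
  have hxp : (0:ℝ) < (1+x)/(1-x) := div_pos (by linarith) (by linarith)
  have hyp : (0:ℝ) < (1+y)/(1-y) := div_pos (by linarith) (by linarith)
  have hlog : Real.log ((1+x)/(1-x)) = Real.log ((1+y)/(1-y)) := by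
    unfold arctanh at h; linarith
  have heq := Real.log_injOn_pos (Set.mem_Ioi.mpr hxp) (Set.mem_Ioi.mpr hyp) hlog
  have hx' : (1:ℝ) - x ≠ 0 := by linarith
  have hy' : (1:ℝ) - y ≠ 0 := by linarith
  field_simp at heq
  nlinarith [heq]

lemma G_mono {a b : ℝ} (ha : 0 < a) (hab : a < b) (hb : b < 1) :
    Real.arcsin a / Real.sqrt (1 - a^2) < Real.arcsin b / Real.sqrt (1 - b^2) := by
  have h1 : Real.arcsin a < Real.arcsin b :=
    Real.strictMonoOn_arcsin ⟨by linarith, by linarith⟩ ⟨by linarith, by linarith⟩ hab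
  have h0 : 0 < Real.arcsin a := Real.arcsin_pos.mpr ha
  have hsb : 0 < Real.sqrt (1 - b^2) := Real.sqrt_pos.mpr (by nlinarith)
  have hsa : Real.sqrt (1 - b^2) < Real.sqrt (1 - a^2) :=
    Real.sqrt_lt_sqrt (by nlinarith) (by nlinarith)
  rw [div_lt_div_iff₀ (by linarith) hsb]
  nlinarith

lemma sqrt_fact {H : ℝ} (hH : 1/2 < H) :
    Real.sqrt (4*H^2 - 1) = 2*H * Real.sqrt (1 - (1/(2*H))^2) := by
  have hHpos : 0 < H := by linarith
  have h : 4*H^2 - 1 = (2*H)^2 * (1 - (1/(2*H))^2) := by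
    field_simp; ring
  rw [h, Real.sqrt_mul (by positivity), Real.sqrt_sq (by positivity)]

lemma hC_of_cos_zero {H u₀ : ℝ} (hH : 1/2 < H) (hc : Real.cos u₀ = 0) :
    hC H u₀ = Real.sin u₀ * (Real.arcsin (1/(2*H)) / Real.sqrt (1 - (1/(2*H))^2)) := by
  have hHpos : 0 < H := by linarith
  have ht0 : (0:ℝ) < 1/(2*H) := by positivity
  have ht1 : (1:ℝ)/(2*H) < 1 := by
    rw [div_lt_one (by linarith)]; linarith
  have hs : (0:ℝ) < Real.sqrt (1 - (1/(2*H))^2) := Real.sqrt_pos.mpr (by nlinarith)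
  have h4 : Real.sqrt (4*H^2 - Real.cos u₀ ^ 2) = 2*H := by
    rw [hc, show (4*H^2 - 0^2 : ℝ) = (2*H)^2 by ring, Real.sqrt_sq (by positivity)]
  have hs2 : Real.sin u₀ ^ 2 = 1 := by
    have := Real.sin_sq_add_cos_sq u₀; rw [hc] at this; nlinarith
  have hcase : Real.sin u₀ = 1 ∨ Real.sin u₀ = -1 := by
    rcases mul_eq_zero.mp (show (Real.sin u₀ - 1) * (Real.sin u₀ + 1) = 0 by nlinarith) with h | h
    · left; linarith
    · right; linarith
  unfold hC
  rw [h4, sqrt_fact hH]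
  rcases hcase with h | h
  · rw [h]
    field_simp
  · rw [h, show (-1 : ℝ)/(2*H) = -(1/(2*H)) by ring, Real.arcsin_neg]
    field_simp

lemma G_of_lt {H₁ H₂ : ℝ} (h₁ : 1/2 < H₁) (hlt : H₁ < H₂) :
    Real.arcsin (1/(2*H₂)) / Real.sqrt (1 - (1/(2*H₂))^2) <
      Real.arcsin (1/(2*H₁)) / Real.sqrt (1 - (1/(2*H₁))^2) := by
  have hH1 : 0 < H₁ := by linarith
  have hH2 : 0 < H₂ := by linarith
  apply G_mono
  · positivity
  · rw [div_lt_div_iff₀ (by linarith) (by linarith)]; linarith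
  · rw [div_lt_one (by linarith)]; linarith

/-- Distinct profile curves `α_{H₁}` and `α_{H₂}` (for `1/2 < H₁ ≠ H₂`) never agree at a
common parameter `u₀`: `α_{H₁}(u₀) ≠ α_{H₂}(u₀)`. -/
theorem stmt4 (H₁ H₂ : ℝ) (h₁ : 1/2 < H₁) (h₂ : 1/2 < H₂) (hne : H₁ ≠ H₂) (u₀ : ℝ) :
    (rC H₁ u₀, hC H₁ u₀) ≠ (rC H₂ u₀, hC H₂ u₀) := by
  intro heq
  have hr : rC H₁ u₀ = rC H₂ u₀ := congrArg Prod.fst heq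
  have hh : hC H₁ u₀ = hC H₂ u₀ := congrArg Prod.snd heq
  have hH1 : 0 < H₁ := by linarith
  have hH2 : 0 < H₂ := by linarith
  by_cases hc : Real.cos u₀ = 0
  · -- use the h-coordinates
    rw [hC_of_cos_zero h₁ hc, hC_of_cos_zero h₂ hc] at hh
    have hs2 : Real.sin u₀ ^ 2 = 1 := by
      have := Real.sin_sq_add_cos_sq u₀; rw [hc] at this; nlinarith
    have hsne : Real.sin u₀ ≠ 0 := by
      intro h; rw [h] at hs2; norm_num at hs2
    have hG : Real.arcsin (1/(2*H₁)) / Real.sqrt (1 - (1/(2*H₁))^2) =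
        Real.arcsin (1/(2*H₂)) / Real.sqrt (1 - (1/(2*H₂))^2) :=
      mul_left_cancel₀ hsne hh
    rcases lt_or_gt_of_ne hne with h | h
    · linarith [G_of_lt h₁ h]
    · linarith [G_of_lt h₂ h]
  · -- use the r-coordinates
    have habs : |Real.cos u₀| ≤ 1 := Real.abs_cos_le_one u₀
    have hx1 : |Real.cos u₀ / (2*H₁)| < 1 := by
      rw [abs_div, abs_of_pos (show (0:ℝ) < 2*H₁ by linarith), div_lt_one (by linarith)]
      linarith
    have hx2 : |Real.cos u₀ / (2*H₂)| < 1 := by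
      rw [abs_div, abs_of_pos (show (0:ℝ) < 2*H₂ by linarith), div_lt_one (by linarith)]
      linarith
    have := arctanh_inj' hx1 hx2 hr
    rw [div_eq_div_iff (by linarith) (by linarith)] at this
    have : H₁ = H₂ := by
      have h2 : Real.cos u₀ * (2*H₂) = Real.cos u₀ * (2*H₁) := by linarith
      have := mul_left_cancel₀ hc h2
      linarith
    exact hne this
end

section
/- For all κ > 0 and all H with 0 < H ≤ √κ/2, there is no positive integer m satisfying √(4H²+κ)/√κ < m < π/(2 arctan(√κ/(2H))). -/
open Real

/-- For `κ > 0` and `0 < H ≤ √κ/2`, no positive integer `m` satisfies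
`√(4H²+κ)/√κ < m < π/(2 arctan(√κ/(2H)))`. -/
theorem stmt10 (κ H : ℝ) (hκ : 0 < κ) (hH : 0 < H) (hle : H ≤ Real.sqrt κ / 2) :
    ¬ ∃ m : ℕ, 0 < m ∧ Real.sqrt (4*H^2 + κ) / Real.sqrt κ < (m : ℝ) ∧
      (m : ℝ) < π / (2 * Real.arctan (Real.sqrt κ / (2*H))) := by
  rintro ⟨m, hm, hlow, hhigh⟩
  have hsκ : 0 < Real.sqrt κ := Real.sqrt_pos.mpr hκ
  -- lower bound > 1
  have h1 : (1 : ℝ) < Real.sqrt (4*H^2 + κ) / Real.sqrt κ := by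
    rw [lt_div_iff₀ hsκ, one_mul]
    exact Real.sqrt_lt_sqrt hκ.le (by nlinarith)
  have hm2 : (2 : ℝ) ≤ (m : ℝ) := by
    have : (1 : ℝ) < (m : ℝ) := lt_trans h1 hlow
    exact_mod_cast Nat.one_lt_cast.mp this
  -- upper bound ≤ 2
  have harg : (1 : ℝ) ≤ Real.sqrt κ / (2*H) := by
    rw [le_div_iff₀ (by positivity)]
    linarith
  have hat : π/4 ≤ Real.arctan (Real.sqrt κ / (2*H)) := by
    calc π/4 = Real.arctan 1 := Real.arctan_one.symm
    _ ≤ _ := Real.arctan_strictMono.monotone harg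
  have hatpos : 0 < Real.arctan (Real.sqrt κ / (2*H)) :=
    lt_of_lt_of_le (by positivity) hat
  have hub : π / (2 * Real.arctan (Real.sqrt κ / (2*H))) ≤ 2 := by
    rw [div_le_iff₀ (by positivity)]
    nlinarith [Real.pi_pos]
  linarith
end

section
/- For each integer m ≥ 2, cot(π/(2m)) < √(m² − 1). -/
open Real

/-- For each integer `m ≥ 2`, `cot(π/(2m)) < √(m² − 1)`. -/
theorem stmt12 (m : ℕ) (hm : 2 ≤ m) :
    Real.cos (π/(2*m)) / Real.sin (π/(2*m)) < Real.sqrt ((m:ℝ)^2 - 1) := by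
  have hm2 : (2:ℝ) ≤ (m:ℝ) := by exact_mod_cast hm
  have hπ := Real.pi_pos
  set x := π/(2*(m:ℝ)) with hx
  have hx0 : 0 < x := by positivity
  have hxlt : x < π/2 := by
    rw [hx, div_lt_div_iff₀ (by positivity) (by norm_num)]
    nlinarith
  have hcos : 0 < Real.cos x := Real.cos_pos_of_mem_Ioo ⟨by linarith, hxlt⟩
  have hsin : 0 < Real.sin x := Real.sin_pos_of_pos_of_lt_pi hx0 (by linarith)
  have htan := Real.lt_tan hx0 hxlt
  rw [Real.tan_eq_sin_div_cos] at htan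
  have hxc : x * Real.cos x < Real.sin x := (lt_div_iff₀ hcos).mp htan
  have h1 : Real.cos x / Real.sin x < 1 / x := by
    rw [div_lt_div_iff₀ hsin hx0]
    nlinarith
  have hm4 : (4:ℝ) ≤ (m:ℝ)^2 := by nlinarith
  have hπ2 : (9.8:ℝ) < π^2 := by nlinarith [Real.pi_gt_d6]
  have h2 : (1 : ℝ) / x < Real.sqrt ((m:ℝ)^2 - 1) := by
    have hx1 : (1:ℝ)/x = 2*(m:ℝ)/π := by rw [hx]; field_simp
    rw [hx1]
    have hsq : (2*(m:ℝ)/π)^2 < (m:ℝ)^2 - 1 := by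
      rw [div_pow, div_lt_iff₀ (by positivity)]
      nlinarith
    have h := Real.sqrt_lt_sqrt (by positivity) hsq
    rwa [Real.sqrt_sq (by positivity)] at h
  linarith
end
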